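/- arXiv:0912.1582 — 5 statements merged into one kernel-verified Lean document; each statement's English description precedes it below -/
import Mathlib

section
/- In the case $n = 3$ (three rows), for any four monomials $w_1,w_2,w_3,w_4$ in variables $x_1,\dots,x_m$, the following identity of polarized power sums holds: $6[w_1w_2w_3w_4] = 2[w_1w_2w_3][w_4] + 2[w_1w_2w_4][w_3] + 2[w_1w_3w_4][w_2] + 2[w_2w_3w_4][w_1] + [w_1w_2][w_3w_4] + [w_1w_3][w_2w_4] + [w_1w_4][w_2w_3] - [w_1w_2][w_3][w_4] - [w_1w_3][w_2][w_4] - [w_1w_4][w_2][w_3] - [w_2w_3][w_1][w_4] - [w_2w_4][w_1][w_3] - [w_3w_4][w_1][w_2] + [w_1][w_2][w_3][w_4]$. -/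
/-!
Evaluating each monomial row by row, `[w] = ∑ᵢ wᵢ` with `(w w')ᵢ = wᵢ w'ᵢ`, so the relation is
the full polarization of Newton's expression of the elementary symmetric function `e₄` in power
sums, `24 e₄ = p₁⁴ - 6 p₁² p₂ + 3 p₂² + 8 p₁ p₃ - 6 p₄`, and `e₄` of three quantities vanishes.
It is therefore an identity between polynomials in the twelve row values `wₖ,ᵢ`, valid in every
commutative ring.
-/

open MvPolynomial

/-- The polarized power sum `[w]` for `n = 3`, where `w` is the monomial with
exponent vector `α`. -/
noncomputable def pp3 (m : ℕ) (α : Fin m → ℕ) : MvPolynomial (Fin 3 × Fin m) ℂ :=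
  ∑ i : Fin 3, ∏ j : Fin m, X (i, j) ^ α j

local notation "⟦" f "⟧₃" => ∑ i : Fin 3, f i

theorem polarized_newton_e4_fin_three {R : Type*} [CommRing R] (a b c d : Fin 3 → R) :
    6 * ⟦a * b * c * d⟧₃
    = 2 * ⟦a * b * c⟧₃ * ⟦d⟧₃ + 2 * ⟦a * b * d⟧₃ * ⟦c⟧₃ + 2 * ⟦a * c * d⟧₃ * ⟦b⟧₃
      + 2 * ⟦b * c * d⟧₃ * ⟦a⟧₃
      + ⟦a * b⟧₃ * ⟦c * d⟧₃ + ⟦a * c⟧₃ * ⟦b * d⟧₃ + ⟦a * d⟧₃ * ⟦b * c⟧₃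
      - ⟦a * b⟧₃ * ⟦c⟧₃ * ⟦d⟧₃ - ⟦a * c⟧₃ * ⟦b⟧₃ * ⟦d⟧₃ - ⟦a * d⟧₃ * ⟦b⟧₃ * ⟦c⟧₃
      - ⟦b * c⟧₃ * ⟦a⟧₃ * ⟦d⟧₃ - ⟦b * d⟧₃ * ⟦a⟧₃ * ⟦c⟧₃ - ⟦c * d⟧₃ * ⟦a⟧₃ * ⟦b⟧₃
      + ⟦a⟧₃ * ⟦b⟧₃ * ⟦c⟧₃ * ⟦d⟧₃ := by
  simp only [Fin.sum_univ_three, Pi.mul_apply]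
  ring

noncomputable def rowMonomial (m : ℕ) (α : Fin m → ℕ) (i : Fin 3) :
    MvPolynomial (Fin 3 × Fin m) ℂ :=
  ∏ j : Fin m, X (i, j) ^ α j

theorem pp3_eq_sum_rowMonomial (m : ℕ) (α : Fin m → ℕ) : pp3 m α = ⟦rowMonomial m α⟧₃ := rfl

theorem rowMonomial_add (m : ℕ) (α β : Fin m → ℕ) :
    rowMonomial m (α + β) = rowMonomial m α * rowMonomial m β := by
  ext i
  simp only [rowMonomial, Pi.add_apply, Pi.mul_apply, pow_add, Finset.prod_mul_distrib]

/-- the fundamental relation `Ψ₄(w₁,w₂,w₃,w₄) = 0` for `n = 3`. -/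
theorem fundamental_relation_three (m : ℕ) (a b c d : Fin m → ℕ) :
    6 * pp3 m (a + b + c + d)
    = 2 * pp3 m (a + b + c) * pp3 m d + 2 * pp3 m (a + b + d) * pp3 m c
      + 2 * pp3 m (a + c + d) * pp3 m b + 2 * pp3 m (b + c + d) * pp3 m a
      + pp3 m (a + b) * pp3 m (c + d) + pp3 m (a + c) * pp3 m (b + d)
      + pp3 m (a + d) * pp3 m (b + c)
      - pp3 m (a + b) * pp3 m c * pp3 m d - pp3 m (a + c) * pp3 m b * pp3 m d
      - pp3 m (a + d) * pp3 m b * pp3 m c - pp3 m (b + c) * pp3 m a * pp3 m d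
      - pp3 m (b + d) * pp3 m a * pp3 m c - pp3 m (c + d) * pp3 m a * pp3 m b
      + pp3 m a * pp3 m b * pp3 m c * pp3 m d := by
  simp only [pp3_eq_sum_rowMonomial, rowMonomial_add]
  exact polarized_newton_e4_fin_three _ _ _ _
end

section
/- For $n = 3$ and two vector variables, the following polynomial identity holds among polarized power sums (writing $x = x_1$, $y = x_2$): $6[x^2y][xy] - 3[xy^2][x^2] - 2[x^2y][x][y] + [xy^2][x]^2 - 4[xy]^2[x] + 2[xy][x]^2[y] - 3[x^3][y^2] + 4[x^2][x][y^2] - [x]^3[y^2] + [x^3][y]^2 - [x^2][x][y]^2 = 0$. -/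
open MvPolynomial

/-- `[x^a y^b] = ∑_{i=1}^3 x_i^a y_i^b` in `ℂ[x₁,x₂,x₃,y₁,y₂,y₃]`. -/
noncomputable def br (a b : ℕ) : MvPolynomial (Fin 2 × Fin 3) ℂ :=
  ∑ i : Fin 3, X ((0 : Fin 2), i) ^ a * X ((1 : Fin 2), i) ^ b

section PolarizedPowerSum

variable {R : Type*} [CommRing R]

def polarizedPowerSum {n : ℕ} (x y : Fin n → R) (a b : ℕ) : R :=
  ∑ i, x i ^ a * y i ^ b

theorem polarizedPowerSum_J32 (x y : Fin 3 → R) :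
    let p := polarizedPowerSum x y
    6 * p 2 1 * p 1 1 - 3 * p 1 2 * p 2 0 - 2 * p 2 1 * p 1 0 * p 0 1
    + p 1 2 * p 1 0 ^ 2 - 4 * p 1 1 ^ 2 * p 1 0 + 2 * p 1 1 * p 1 0 ^ 2 * p 0 1
    - 3 * p 3 0 * p 0 2 + 4 * p 2 0 * p 1 0 * p 0 2 - p 1 0 ^ 3 * p 0 2
    + p 3 0 * p 0 1 ^ 2 - p 2 0 * p 1 0 * p 0 1 ^ 2 = 0 := by
  simp only [polarizedPowerSum, Fin.sum_univ_three]
  ring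

end PolarizedPowerSum

/-- the relation `J_{3,2}` holds among polarized power sums. -/
theorem relation_J32 :
    6 * br 2 1 * br 1 1 - 3 * br 1 2 * br 2 0 - 2 * br 2 1 * br 1 0 * br 0 1
    + br 1 2 * br 1 0 ^ 2 - 4 * br 1 1 ^ 2 * br 1 0 + 2 * br 1 1 * br 1 0 ^ 2 * br 0 1
    - 3 * br 3 0 * br 0 2 + 4 * br 2 0 * br 1 0 * br 0 2 - br 1 0 ^ 3 * br 0 2
    + br 3 0 * br 0 1 ^ 2 - br 2 0 * br 1 0 * br 0 1 ^ 2 = 0 := by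
  exact polarizedPowerSum_J32 (fun i ↦ X (0, i)) (fun i ↦ X (1, i))
end

section
/- For $n = 3$ and two vector variables, the following polynomial identity holds among polarized power sums: $6[x^2y]^2 + [xy]^2[x^2] - 3[xy]^2[x]^2 - 6[x^3][xy^2] + 2[x^2][xy^2][x] + 4[x^3][xy][y] - 2[x^2][xy][x][y] + 2[xy][x]^3[y] - 4[x^2y][x^2][y] - [x^2]^2[y^2] + [x^2]^2[y]^2 + 4[x^2][x]^2[y^2] - [x^2][x]^2[y]^2 - [x]^4[y^2] - 2[x^3][x][y^2] = 0$. -/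
open MvPolynomial

/-- the relation `J_{4,2}` holds among polarized power sums. -/
theorem relation_J42 :
    6 * br 2 1 ^ 2 + br 1 1 ^ 2 * br 2 0 - 3 * br 1 1 ^ 2 * br 1 0 ^ 2
    - 6 * br 3 0 * br 1 2 + 2 * br 2 0 * br 1 2 * br 1 0
    + 4 * br 3 0 * br 1 1 * br 0 1 - 2 * br 2 0 * br 1 1 * br 1 0 * br 0 1
    + 2 * br 1 1 * br 1 0 ^ 3 * br 0 1 - 4 * br 2 1 * br 2 0 * br 0 1
    - br 2 0 ^ 2 * br 0 2 + br 2 0 ^ 2 * br 0 1 ^ 2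
    + 4 * br 2 0 * br 1 0 ^ 2 * br 0 2 - br 2 0 * br 1 0 ^ 2 * br 0 1 ^ 2
    - br 1 0 ^ 4 * br 0 2 - 2 * br 3 0 * br 1 0 * br 0 2 = 0 := by
  simp only [br, Fin.sum_univ_three]
  ring
end

section
/- For $n=3$ with three vector variables $x,y,z$: the element $[x^2y][xz] + [x^2z][xy]$ lies in the ideal of $\mathbb{C}[x_i,y_i,z_i : i=1,2,3]$ generated by the pure power sums $[x^k],[y^k],[z^k]$ for $k=1,2,3$. -/
open MvPolynomial

/-- `[x^a y^b z^c] = ∑_{i=1}^3 x_i^a y_i^b z_i^c`. -/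
noncomputable def br3 (a b c : ℕ) : MvPolynomial (Fin 3 × Fin 3) ℂ :=
  ∑ i : Fin 3, X ((0 : Fin 3), i) ^ a * X ((1 : Fin 3), i) ^ b * X ((2 : Fin 3), i) ^ c

/-- The ideal generated by the pure power sums `[x^k],[y^k],[z^k]`, `k = 1,2,3`. -/
noncomputable def P3 : Ideal (MvPolynomial (Fin 3 × Fin 3) ℂ) :=
  Ideal.span {br3 1 0 0, br3 2 0 0, br3 3 0 0, br3 0 1 0, br3 0 2 0, br3 0 3 0,
    br3 0 0 1, br3 0 0 2, br3 0 0 3}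

/-- `[x²y][xz] + [x²z][xy] ≡ 0 mod (P)` (relation `r_{3,1,1}`). -/
theorem r311_mem : br3 2 1 0 * br3 1 0 1 + br3 2 0 1 * br3 1 1 0 ∈ P3 := by
  have h1 : br3 1 0 0 ∈ P3 := Ideal.subset_span (by simp)
  have h2 : br3 2 0 0 ∈ P3 := Ideal.subset_span (by simp)
  have h3 : br3 3 0 0 ∈ P3 := Ideal.subset_span (by simp)
  set g1 := br3 1 0 0
  set g2 := br3 2 0 0
  set g3 := br3 3 0 0
  set E1 : MvPolynomial (Fin 3 × Fin 3) ℂ := br3 2 1 1 + br3 1 1 0 * br3 1 0 1 with hE1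
  set E3 : MvPolynomial (Fin 3 × Fin 3) ℂ := 3 * br3 0 1 1 - br3 0 1 0 * br3 0 0 1 with hE3
  have key : (6 : MvPolynomial (Fin 3 × Fin 3) ℂ) *
      (br3 2 1 0 * br3 1 0 1 + br3 2 0 1 * br3 1 1 0) =
      (6 * E1 - 6 * br3 1 1 1 * g1 + E3 * g1 ^ 2) * g1 +
      (6 * br3 1 1 1 - 3 * E3 * g1) * g2 + (2 * E3) * g3 := by
    simp only [hE1, hE3, g1, g2, g3, br3, Fin.sum_univ_three]
    ring
  have h6 : (6 : MvPolynomial (Fin 3 × Fin 3) ℂ) *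
      (br3 2 1 0 * br3 1 0 1 + br3 2 0 1 * br3 1 1 0) ∈ P3 := by
    rw [key]
    exact add_mem (add_mem (Ideal.mul_mem_left _ _ h1) (Ideal.mul_mem_left _ _ h2))
      (Ideal.mul_mem_left _ _ h3)
  have heq : br3 2 1 0 * br3 1 0 1 + br3 2 0 1 * br3 1 1 0 =
      C ((6 : ℂ)⁻¹) * ((6 : MvPolynomial (Fin 3 × Fin 3) ℂ) *
        (br3 2 1 0 * br3 1 0 1 + br3 2 0 1 * br3 1 1 0)) := by
    have h6C : (6 : MvPolynomial (Fin 3 × Fin 3) ℂ) = C (6 : ℂ) :=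
      (map_ofNat C 6).symm
    rw [h6C, ← mul_assoc, ← C_mul]
    norm_num
  rw [heq]
  exact Ideal.mul_mem_left _ _ h6
end

section
/- Let $n=3$. If a monomial $x_1^{\alpha_1}\cdots x_m^{\alpha_m}$ has some exponent $\alpha_j \ge 3$ and total degree $\alpha_1+\cdots+\alpha_m \ge 4$, then the polarized power sum $[x_1^{\alpha_1}\cdots x_m^{\alpha_m}]$ lies in the ideal of $\mathbb{C}[x_{ij} : i \le 3, j \le m]$ generated by the pure power sums $[x_j^k]$ for $j = 1,\dots,m$ and $k = 1,2,3$. -/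
open MvPolynomial

/-- Any of the three "roots" `a, b, c` satisfies the cubic whose coefficients are
(6 times) the Newton expressions of the power sums. -/
private lemma cube_identity {R : Type*} [CommRing R] (a b c y : R)
    (h : y = a ∨ y = b ∨ y = c) :
    6 * y ^ 3 =
      (a + b + c) * (6 * y ^ 2 - 3 * (a + b + c) * y + (a + b + c) ^ 2) +
        (a ^ 2 + b ^ 2 + c ^ 2) * (3 * y - 3 * (a + b + c)) +
        (a ^ 3 + b ^ 3 + c ^ 3) * 2 := by
  rcases h with rfl | rfl | rfl <;> ring

private lemma cube_mem_span (m : ℕ) (j : Fin m) (i : Fin 3) :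
    (X (i, j) : MvPolynomial (Fin 3 × Fin m) ℂ) ^ 3
      ∈ Ideal.span (Set.range (fun jk : Fin m × Fin 3 =>
          ∑ i : Fin 3, (X (i, jk.1) : MvPolynomial (Fin 3 × Fin m) ℂ) ^ ((jk.2 : ℕ) + 1))) := by
  set I := Ideal.span (Set.range (fun jk : Fin m × Fin 3 =>
      ∑ i : Fin 3, (X (i, jk.1) : MvPolynomial (Fin 3 × Fin m) ℂ) ^ ((jk.2 : ℕ) + 1))) with hI
  have hp : ∀ k : Fin 3,
      (∑ i : Fin 3, (X (i, j) : MvPolynomial (Fin 3 × Fin m) ℂ) ^ ((k : ℕ) + 1)) ∈ I :=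
    fun k => Ideal.subset_span ⟨(j, k), rfl⟩
  have hp1 : (X (0, j) + X (1, j) + X (2, j) : MvPolynomial (Fin 3 × Fin m) ℂ) ∈ I := by
    simpa [Fin.sum_univ_three] using hp 0
  have hp2 : (X (0, j) ^ 2 + X (1, j) ^ 2 + X (2, j) ^ 2 :
      MvPolynomial (Fin 3 × Fin m) ℂ) ∈ I := by
    simpa [Fin.sum_univ_three] using hp 1
  have hp3 : (X (0, j) ^ 3 + X (1, j) ^ 3 + X (2, j) ^ 3 :
      MvPolynomial (Fin 3 × Fin m) ℂ) ∈ I := by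
    simpa [Fin.sum_univ_three] using hp 2
  have hi : (X (i, j) : MvPolynomial (Fin 3 × Fin m) ℂ) = X (0, j) ∨
      (X (i, j) : MvPolynomial (Fin 3 × Fin m) ℂ) = X (1, j) ∨
      (X (i, j) : MvPolynomial (Fin 3 × Fin m) ℂ) = X (2, j) := by
    have : i = 0 ∨ i = 1 ∨ i = 2 := by omega
    rcases this with rfl | rfl | rfl
    · exact Or.inl rfl
    · exact Or.inr (Or.inl rfl)
    · exact Or.inr (Or.inr rfl)
  have key := cube_identity (X (0, j)) (X (1, j)) (X (2, j))
    (X (i, j) : MvPolynomial (Fin 3 × Fin m) ℂ) hi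
  have h6 : (6 : MvPolynomial (Fin 3 × Fin m) ℂ) * X (i, j) ^ 3 ∈ I := by
    rw [key]
    exact Ideal.add_mem _ (Ideal.add_mem _ (Ideal.mul_mem_right _ _ hp1)
      (Ideal.mul_mem_right _ _ hp2)) (Ideal.mul_mem_right _ _ hp3)
  have hrw : (X (i, j) : MvPolynomial (Fin 3 × Fin m) ℂ) ^ 3
      = C ((6 : ℂ)⁻¹) * (6 * X (i, j) ^ 3) := by
    rw [← mul_assoc, (map_ofNat C 6).symm, ← C_mul]
    norm_num
  rw [hrw]
  exact Ideal.mul_mem_left _ _ h6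

/-- for `n = 3`, if a monomial has some exponent `≥ 3` and total
degree `≥ 4`, then its polarized power sum lies in the ideal generated by the
pure power sums `[x_j^k]`, `j = 1,…,m`, `k = 1,2,3`. -/
theorem polarized_power_sum_mem_of_high_exponent (m : ℕ) (α : Fin m → ℕ)
    (h3 : ∃ j, 3 ≤ α j) (h4 : 4 ≤ ∑ j, α j) :
    (∑ i : Fin 3, ∏ j : Fin m, (X (i, j) : MvPolynomial (Fin 3 × Fin m) ℂ) ^ α j)
      ∈ Ideal.span (Set.range (fun jk : Fin m × Fin 3 =>
          ∑ i : Fin 3, (X (i, jk.1) : MvPolynomial (Fin 3 × Fin m) ℂ) ^ ((jk.2 : ℕ) + 1))) := by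
  obtain ⟨j0, hj0⟩ := h3
  apply Ideal.sum_mem
  intro i _
  have hprod : (∏ j : Fin m, (X (i, j) : MvPolynomial (Fin 3 × Fin m) ℂ) ^ α j)
      = X (i, j0) ^ α j0 * ∏ j ∈ Finset.univ.erase j0,
          (X (i, j) : MvPolynomial (Fin 3 × Fin m) ℂ) ^ α j :=
    (Finset.mul_prod_erase _ _ (Finset.mem_univ j0)).symm
  rw [hprod, show α j0 = 3 + (α j0 - 3) from (Nat.add_sub_cancel' hj0).symm, pow_add,
    mul_assoc]
  exact Ideal.mul_mem_right _ _ (cube_mem_span m j0 i)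
end
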